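/- arXiv:2010.09020 — 2 statements merged into one kernel-verified Lean document; each statement's English description precedes it below -/
import Mathlib

section
/- Let $\mu$ be a finite measure on a star body $D$ in $\mathbb{R}^n$ with density $g$ satisfying $0 \le g \le 1$, and let $0 < p < n$. Then $\left(\frac{\int_D \|x\|_D^{-p} g(x)\,dx}{\int_D \|x\|_D^{-p}\,dx}\right)^{1/(n-p)} \le \left(\frac{\int_D g(x)\,dx}{|D|}\right)^{1/n}$. -/
open MeasureTheory Set Metric Real
open scoped Real

noncomputable section

abbrev Euc (n : ℕ) := EuclideanSpace ℝ (Fin n)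

/-- A star body: compact, origin interior, continuous Minkowski functional (gauge),
and `K` is the unit ball of its gauge. -/
def IsStarBody {n : ℕ} (K : Set (Euc n)) : Prop :=
  IsCompact K ∧ 0 ∈ interior K ∧ Continuous (gauge K) ∧ K = {x | gauge K x ≤ 1}

open scoped ENNReal Pointwise

/-!
Bathtub principle: the weight `‖x‖_D^{-p}` is a decreasing function of the gauge, so among
densities `0 ≤ g ≤ 1` of prescribed mass `∫ g` the weighted integral `∫ ‖x‖_D^{-p} g` is largest
for the indicator of the sublevel set `t • D = {‖x‖_D ≤ t}` of the same mass, i.e. with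
`t ^ n |D| = ∫ g`. By homogeneity of the gauge and of Lebesgue measure,
`∫_{t • D} ‖x‖_D^{-p} = t ^ (n - p) ∫_D ‖x‖_D^{-p}`, and taking `(n - p)`-th roots gives the claim.
The weight is integrable for `p < n` because `‖x‖_D ≥ ‖x‖ / R` when `D ⊆ closedBall 0 R`.
-/

section Bathtub

variable {α : Type*} [MeasurableSpace α] {μ : Measure α} {K S : Set α} {f g : α → ℝ} {c : ℝ}

theorem ae_norm_le_one_of_nonneg_of_le_one (hg0 : ∀ᵐ x ∂μ.restrict K, 0 ≤ g x)
    (hg1 : ∀ᵐ x ∂μ.restrict K, g x ≤ 1) : ∀ᵐ x ∂μ.restrict K, ‖g x‖ ≤ 1 := by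
  filter_upwards [hg0, hg1] with x h0 h1
  rwa [Real.norm_of_nonneg h0]

theorem setIntegral_mul_eq_zero_of_setIntegral_eq_zero (hg : IntegrableOn g K μ)
    (hg0 : ∀ᵐ x ∂μ.restrict K, 0 ≤ g x) (h : ∫ x in K, g x ∂μ = 0) :
    ∫ x in K, f x * g x ∂μ = 0 := by
  have hg_ae : g =ᵐ[μ.restrict K] 0 := (integral_eq_zero_iff_of_nonneg_ae hg0 hg).1 h
  exact integral_eq_zero_of_ae (by filter_upwards [hg_ae] with x hx; simp [hx])

theorem setIntegral_mul_le_of_bathtub (hKμ : μ K ≠ ∞) (hS : MeasurableSet S) (hSK : S ⊆ K)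
    (hf : IntegrableOn f K μ) (hgm : AEStronglyMeasurable g (μ.restrict K))
    (hg0 : ∀ᵐ x ∂μ.restrict K, 0 ≤ g x) (hg1 : ∀ᵐ x ∂μ.restrict K, g x ≤ 1)
    (hf_ge : ∀ᵐ x ∂μ.restrict K, x ∈ S → c ≤ f x)
    (hf_le : ∀ᵐ x ∂μ.restrict K, x ∉ S → f x ≤ c)
    (hSg : μ.real S = ∫ x in K, g x ∂μ) :
    ∫ x in K, f x * g x ∂μ ≤ ∫ x in S, f x ∂μ := by
  have hg_norm := ae_norm_le_one_of_nonneg_of_le_one hg0 hg1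
  have hg : IntegrableOn g K μ := (integrableOn_const hKμ).mono' hgm hg_norm
  have h1S : IntegrableOn (S.indicator 1) K μ :=
    (integrableOn_const (C := (1 : ℝ)) hKμ).indicator hS
  -- on `S` because `f ≥ c` and `g ≤ 1`, off `S` because `f ≤ c` and `g ≥ 0`
  have hpt : ∀ᵐ x ∂μ.restrict K, f x * g x ≤ S.indicator f x + c * (g x - S.indicator 1 x) := by
    filter_upwards [hg0, hg1, hf_ge, hf_le] with x h0 h1 hge hle
    by_cases hx : x ∈ S
    · simp only [indicator_of_mem hx, Pi.one_apply]
      nlinarith [hge hx]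
    · simp only [indicator_of_notMem hx]
      nlinarith [hle hx]
  have hrest : IntegrableOn (fun x => c * (g x - S.indicator 1 x)) K μ :=
    (hg.sub h1S).const_mul c
  calc ∫ x in K, f x * g x ∂μ
      ≤ ∫ x in K, (S.indicator f x + c * (g x - S.indicator 1 x)) ∂μ :=
        integral_mono_ae (hf.mul_bdd hgm hg_norm) ((hf.indicator hS).add hrest) hpt
    _ = ∫ x in S, f x ∂μ := by
        rw [integral_add (hf.indicator hS) hrest, integral_const_mul,
          integral_sub hg h1S, setIntegral_indicator hS, setIntegral_indicator hS,
          inter_eq_self_of_subset_right hSK, ← hSg]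
        simp

end Bathtub

section Gauge

variable {E : Type*} [NormedAddCommGroup E] [NormedSpace ℝ E] {K : Set E}

theorem smul_set_eq_setOf_gauge_le (hK : K = {x | gauge K x ≤ 1}) {t : ℝ} (ht : 0 < t) :
    t • K = {x | gauge K x ≤ t} := by
  ext x
  rw [mem_smul_set_iff_inv_smul_mem₀ ht.ne', mem_ofPred_eq]
  conv_lhs => rw [hK]
  rw [mem_ofPred_eq, gauge_smul_of_nonneg (inv_nonneg.2 ht.le), smul_eq_mul, inv_mul_le_iff₀ ht,
    mul_one]

variable [FiniteDimensional ℝ E] [MeasurableSpace E] [BorelSpace E] (μ : Measure E)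
  [μ.IsAddHaarMeasure]

theorem setIntegral_smul_set_gauge_rpow_neg {t : ℝ} (ht : 0 < t) (p : ℝ) :
    ∫ x in t • K, gauge K x ^ (-p) ∂μ =
      t ^ ((Module.finrank ℝ E : ℝ) - p) * ∫ x in K, gauge K x ^ (-p) ∂μ := by
  have h := Measure.setIntegral_comp_smul_of_pos μ (fun x => gauge K x ^ (-p)) K ht
  simp only [gauge_smul_of_nonneg ht.le, smul_eq_mul, mul_rpow ht.le (gauge_nonneg _),
    integral_const_mul] at h
  rw [sub_eq_add_neg, rpow_add ht, rpow_natCast, mul_assoc, h, mul_inv_cancel_left₀ (by positivity)]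

theorem integrableOn_gauge_rpow_neg [Nontrivial E] (hK : IsCompact K)
    (hK0 : 0 ∈ interior K) (hgauge : Measurable (gauge K)) {p : ℝ} (hp0 : 0 ≤ p)
    (hpd : p < Module.finrank ℝ E) :
    IntegrableOn (fun x => gauge K x ^ (-p)) K μ := by
  obtain ⟨R, hR, hKR⟩ := hK.isBounded.subset_closedBall_lt 0 0
  have habs : Absorbent ℝ K := absorbent_nhds_zero (mem_interior_iff_mem_nhds.1 hK0)
  refine (locallyIntegrable_of_norm_le_rpow Module.finrank_pos hpd (C := R ^ p) ?_
    (hgauge.pow_const _).aestronglyMeasurable).integrableOn_isCompact hK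
  filter_upwards [μ.ae_ne 0] with x hx
  have hxR : 0 < ‖x‖ / R := div_pos (norm_pos_iff.2 hx) hR
  rw [Real.norm_of_nonneg (rpow_nonneg (gauge_nonneg _) _)]
  calc gauge K x ^ (-p) ≤ (‖x‖ / R) ^ (-p) :=
        rpow_le_rpow_of_nonpos hxR (le_gauge_of_subset_closedBall habs hR.le hKR) (by linarith)
    _ = R ^ p * ‖x‖ ^ (-p) := by
        rw [div_rpow (norm_nonneg _) hR.le, rpow_neg hR.le, div_inv_eq_mul, mul_comm]

theorem setIntegral_gauge_rpow_neg_mul_le [Nontrivial E] (hK : IsCompact K)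
    (hK0 : 0 ∈ interior K) (hgauge : Measurable (gauge K)) (hKg : K = {x | gauge K x ≤ 1})
    {p : ℝ} (hp0 : 0 ≤ p) (hpd : p < Module.finrank ℝ E) {g : E → ℝ}
    (hgm : AEStronglyMeasurable g (μ.restrict K))
    (hg0 : ∀ᵐ x ∂μ.restrict K, 0 ≤ g x) (hg1 : ∀ᵐ x ∂μ.restrict K, g x ≤ 1)
    {t : ℝ} (ht0 : 0 < t) (ht1 : t ≤ 1)
    (htg : t ^ (Module.finrank ℝ E : ℝ) * μ.real K = ∫ x in K, g x ∂μ) :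
    ∫ x in K, gauge K x ^ (-p) * g x ∂μ ≤
      t ^ ((Module.finrank ℝ E : ℝ) - p) * ∫ x in K, gauge K x ^ (-p) ∂μ := by
  have hS : t • K = {x | gauge K x ≤ t} := smul_set_eq_setOf_gauge_le hKg ht0
  have hgauge_pos : ∀ x ≠ 0, 0 < gauge K x := fun x =>
    (gauge_pos (absorbent_nhds_zero (mem_interior_iff_mem_nhds.1 hK0))
      (NormedSpace.isVonNBounded_of_isBounded ℝ hK.isBounded)).2
  rw [← setIntegral_smul_set_gauge_rpow_neg μ ht0]
  refine setIntegral_mul_le_of_bathtub (c := t ^ (-p)) hK.measure_lt_top.ne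
    (hS ▸ measurableSet_le hgauge measurable_const) ?_
    (integrableOn_gauge_rpow_neg μ hK hK0 hgauge hp0 hpd) hgm hg0 hg1 ?_ ?_ ?_
  · rw [hS]
    exact fun x hx => (Set.ext_iff.1 hKg x).2 (le_trans hx ht1)
  · filter_upwards [ae_restrict_of_ae (μ.ae_ne 0)] with x hx hxS
    rw [hS] at hxS
    exact rpow_le_rpow_of_nonpos (hgauge_pos x hx) hxS (neg_nonpos.2 hp0)
  · refine ae_of_all _ fun x hxS => ?_
    rw [hS, mem_ofPred_eq, not_le] at hxS
    exact rpow_le_rpow_of_nonpos ht0 hxS.le (neg_nonpos.2 hp0)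
  · rw [← htg, measureReal_def, Measure.addHaar_smul_of_nonneg μ ht0.le, ENNReal.toReal_mul,
      ENNReal.toReal_ofReal (by positivity), rpow_natCast, measureReal_def]

theorem milmanPajor_ratio_le [Nontrivial E] (hK : IsCompact K)
    (hK0 : 0 ∈ interior K) (hgauge : Measurable (gauge K)) (hKg : K = {x | gauge K x ≤ 1})
    {p : ℝ} (hp0 : 0 ≤ p) (hpd : p < Module.finrank ℝ E) {g : E → ℝ}
    (hgm : AEStronglyMeasurable g (μ.restrict K))
    (hg0 : ∀ᵐ x ∂μ.restrict K, 0 ≤ g x) (hg1 : ∀ᵐ x ∂μ.restrict K, g x ≤ 1) :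
    ((∫ x in K, gauge K x ^ (-p) * g x ∂μ) / ∫ x in K, gauge K x ^ (-p) ∂μ)
        ^ (1 / ((Module.finrank ℝ E : ℝ) - p)) ≤
      ((∫ x in K, g x ∂μ) / μ.real K) ^ (1 / (Module.finrank ℝ E : ℝ)) := by
  have hKμ : μ K ≠ ∞ := hK.measure_lt_top.ne
  have hV : 0 < μ.real K :=
    ENNReal.toReal_pos (μ.measure_pos_of_nonempty_interior ⟨0, hK0⟩).ne' hKμ
  have hd : 0 < (Module.finrank ℝ E : ℝ) := Nat.cast_pos.2 Module.finrank_pos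
  have hdp : 0 < (Module.finrank ℝ E : ℝ) - p := sub_pos.2 hpd
  have hg_norm := ae_norm_le_one_of_nonneg_of_le_one hg0 hg1
  have hg : IntegrableOn g K μ := (integrableOn_const hKμ).mono' hgm hg_norm
  have hJ0 : 0 ≤ ∫ x in K, gauge K x ^ (-p) * g x ∂μ := integral_nonneg_of_ae <| by
    filter_upwards [hg0] with x hx using mul_nonneg (rpow_nonneg (gauge_nonneg _) _) hx
  have hI0 : 0 ≤ ∫ x in K, gauge K x ^ (-p) ∂μ :=
    integral_nonneg fun x => rpow_nonneg (gauge_nonneg _) _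
  rcases (integral_nonneg_of_ae hg0).eq_or_lt with hA | hA
  · rw [setIntegral_mul_eq_zero_of_setIntegral_eq_zero hg hg0 hA.symm, ← hA, zero_div, zero_div,
      zero_rpow (one_div_pos.2 hdp).ne', zero_rpow (one_div_pos.2 hd).ne']
  have hAV : ∫ x in K, g x ∂μ ≤ μ.real K := by
    simpa using (le_abs_self _).trans
      (norm_setIntegral_le_of_norm_le_const_ae hK.measure_lt_top hg_norm)
  set t := ((∫ x in K, g x ∂μ) / μ.real K) ^ (1 / (Module.finrank ℝ E : ℝ)) with ht
  have hJ := setIntegral_gauge_rpow_neg_mul_le μ hK hK0 hgauge hKg hp0 hpd hgm hg0 hg1 (t := t)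
    (by positivity) (rpow_le_one (by positivity) ((div_le_one hV).2 hAV) (by positivity))
    (by rw [ht, one_div, rpow_inv_rpow (by positivity) hd.ne', div_mul_cancel₀ _ hV.ne'])
  calc _ ≤ (t ^ ((Module.finrank ℝ E : ℝ) - p)) ^ (1 / ((Module.finrank ℝ E : ℝ) - p)) :=
        rpow_le_rpow (div_nonneg hJ0 hI0) (div_le_of_le_mul₀ hI0 (by positivity) hJ)
          (by positivity)
    _ = t := by rw [one_div, rpow_rpow_inv (by positivity) hdp.ne']

end Gauge

/-- Milman–Pajor lemma: for a star body `D`, a measurable density `0 ≤ g ≤ 1` on `D`,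
and `0 < p < n`,
`((∫_D ‖x‖_D^{-p} g)/(∫_D ‖x‖_D^{-p}))^(1/(n-p)) ≤ ((∫_D g)/|D|)^(1/n)`. -/
theorem stmt_9 (n : ℕ) (hn : 1 ≤ n) (D : Set (Euc n)) (hD : IsStarBody D)
    (p : ℝ) (hp0 : 0 < p) (hpn : p < n) (g : Euc n → ℝ) (hgm : Measurable g)
    (hg0 : ∀ x ∈ D, 0 ≤ g x) (hg1 : ∀ x ∈ D, g x ≤ 1) :
    ((∫ x in D, gauge D x ^ (-p) * g x) / (∫ x in D, gauge D x ^ (-p)))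
        ^ (1 / ((n : ℝ) - p)) ≤
      ((∫ x in D, g x) / (volume D).toReal) ^ (1 / (n : ℝ)) := by
  obtain ⟨hK, hK0, hcont, hKg⟩ := hD
  have : Nonempty (Fin n) := ⟨⟨0, hn⟩⟩
  have hDm : MeasurableSet D := hK.isClosed.measurableSet
  simpa [finrank_euclideanSpace_fin, measureReal_def] using
    milmanPajor_ratio_le volume hK hK0 hcont.measurable hKg hp0.le
      (by rwa [finrank_euclideanSpace_fin]) hgm.aestronglyMeasurable
      (ae_restrict_of_forall_mem hDm hg0) (ae_restrict_of_forall_mem hDm hg1)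
end
end

section
/- For the Euclidean ball $B_n$ of volume 1 in $\mathbb{R}^n$ and $q \ge 0$ not an odd integer with $q \le n-2$, the quantity $\frac{2^{q} \pi^{(n-2)/2} \Gamma(\frac{q+1}{2})\Gamma(1+\frac n2)^{(n-q-1)/n}}{\Gamma(\frac{n-q-1}{2}+1)\pi^{(n-q-1)/2}}$ is bounded below by $c^{q+1}(q+1)^{(q+1)/2}$ for some absolute constant $c > 0$ independent of $n$ and $q$. -/
/-!
Log-convexity of `Γ` together with `Γ(1) = 1` gives `Γ(1 + m/2) ≤ Γ(1 + n/2)^(m/n)` for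
`m = n - q - 1`, which removes all dependence on `n` and leaves `2^q π^((q-1)/2) Γ((q+1)/2)`.
This one-variable quantity is then bounded below by the crude Stirling bound
`Γ(x) ≥ x^x e^(-2x)`, which comes from restricting the integral for `Γ(x + 1)` to `[x, 2x]`.
-/

open Real MeasureTheory Set

lemma Real.rpow_self_mul_exp_le_Gamma {x : ℝ} (hx : 0 < x) :
    x ^ x * exp (-(2 * x)) ≤ Gamma x := by
  have hint : IntegrableOn (fun t => exp (-t) * t ^ x) (Ioi 0) := by
    simpa using GammaIntegral_convergent (s := x + 1) (by linarith)
  have hsub : Ioc x (2 * x) ⊆ Ioi 0 := fun t ht => hx.trans ht.1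
  have key : x * (exp (-(2 * x)) * x ^ x) ≤ Gamma (x + 1) := by
    rw [Gamma_eq_integral (by linarith), add_sub_cancel_right]
    calc x * (exp (-(2 * x)) * x ^ x)
        = ∫ _ in Ioc x (2 * x), exp (-(2 * x)) * x ^ x := by
          rw [setIntegral_const, volume_real_Ioc_of_le (by linarith), smul_eq_mul]; ring
      _ ≤ ∫ t in Ioc x (2 * x), exp (-t) * t ^ x := by
          refine setIntegral_mono_on (integrableOn_const (by simp)) (hint.mono_set hsub)
            measurableSet_Ioc fun t ht => ?_
          have hxt : x ≤ t := ht.1.le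
          gcongr
          exact ht.2
      _ ≤ ∫ t in Ioi 0, exp (-t) * t ^ x := by
          refine setIntegral_mono_set hint ?_ (.of_forall hsub)
          filter_upwards [ae_restrict_mem measurableSet_Ioi] with t (ht : 0 < t)
          positivity
  rw [Gamma_add_one hx.ne', mul_comm (exp _)] at key
  exact le_of_mul_le_mul_left key hx

lemma Real.Gamma_one_add_mul_le_rpow {s t : ℝ} (hs : 0 < s) (ht₀ : 0 < t) (ht₁ : t < 1) :
    Gamma (1 + t * s) ≤ Gamma (1 + s) ^ t := by
  simpa [← add_assoc, mul_add] using
    Gamma_mul_add_mul_le_rpow_Gamma_mul_rpow_Gamma one_pos (by linarith : 0 < 1 + s)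
      (sub_pos.2 ht₁) ht₀ (sub_add_cancel 1 t)

lemma le_two_rpow_mul_pi_rpow_mul_Gamma_half {q : ℝ} (hq : -1 / 3 ≤ q) :
    (exp (-1) / (2 * π)) ^ (q + 1) * (q + 1) ^ ((q + 1) / 2) ≤
      2 ^ q * π ^ ((q - 1) / 2) * Gamma ((q + 1) / 2) := by
  obtain ⟨x, rfl⟩ : ∃ x, q = 2 * x - 1 := ⟨(q + 1) / 2, by ring⟩
  have hx : 0 < x := by linarith
  rw [sub_add_cancel, mul_div_cancel_left₀ x two_ne_zero,
    show (2 * x - 1 - 1) / 2 = x - 1 by ring]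
  calc (exp (-1) / (2 * π)) ^ (2 * x) * (2 * x) ^ x
      ≤ 2 ^ (2 * x - 1) * π ^ (x - 1) * (x ^ x * exp (-(2 * x))) := by
        rw [← log_le_log_iff (by positivity) (by positivity)]
        simp (disch := positivity) only [log_mul, log_rpow, log_div, log_exp]
        -- the two logarithms differ by `(3x - 1) log (2π)`
        have h2π : 0 ≤ log 2 + log π := add_nonneg (log_nonneg one_le_two)
          (log_nonneg (by linarith [pi_gt_three]))
        nlinarith [mul_nonneg (by linarith : 0 ≤ 3 * x - 1) h2π]
    _ ≤ 2 ^ (2 * x - 1) * π ^ (x - 1) * Gamma x := by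
        gcongr
        exact rpow_self_mul_exp_le_Gamma hx

/-- There is an absolute constant `c > 0` (independent of `n` and `q`) such that for the
Euclidean ball of volume 1 in `ℝⁿ` and `0 ≤ q ≤ n-2` not an odd integer, the quantity
`2^q π^((n-2)/2) Γ((q+1)/2) Γ(1+n/2)^((n-q-1)/n) / (Γ((n-q-1)/2+1) π^((n-q-1)/2))`
is at least `c^(q+1) (q+1)^((q+1)/2)`. -/
theorem stmt_10 :
    ∃ c : ℝ, 0 < c ∧ ∀ (n : ℕ) (q : ℝ), 2 ≤ n → 0 ≤ q → q ≤ (n : ℝ) - 2 →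
      (¬ ∃ k : ℕ, Odd k ∧ q = (k : ℝ)) →
      c ^ (q + 1) * (q + 1) ^ ((q + 1) / 2) ≤
        2 ^ q * π ^ (((n : ℝ) - 2) / 2) * Real.Gamma ((q + 1) / 2) *
            (Real.Gamma (1 + (n : ℝ) / 2)) ^ (((n : ℝ) - q - 1) / (n : ℝ)) /
          (Real.Gamma (((n : ℝ) - q - 1) / 2 + 1) * π ^ (((n : ℝ) - q - 1) / 2)) := by
  refine ⟨exp (-1) / (2 * π), by positivity, fun n q _ hq hqn _ => ?_⟩
  set m : ℝ := n - q - 1 with hm_def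
  have hn : 0 < (n : ℝ) := by linarith
  have hm : 0 < m := by linarith
  have hΓ : Gamma (m / 2 + 1) ≤ Gamma (1 + n / 2) ^ (m / n) := by
    convert Gamma_one_add_mul_le_rpow (s := n / 2) (by positivity) (t := m / n)
      (by positivity) ((div_lt_one hn).2 (by linarith)) using 2
    field_simp
    ring
  have hπ : π ^ ((n - 2 : ℝ) / 2) = π ^ ((q - 1) / 2) * π ^ (m / 2) := by
    rw [← rpow_add pi_pos, hm_def]
    ring_nf
  have hden : 0 < Gamma (m / 2 + 1) * π ^ (m / 2) :=
    mul_pos (Gamma_pos_of_pos (by positivity)) (by positivity)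
  rw [le_div_iff₀ hden, hπ]
  calc _ ≤ 2 ^ q * π ^ ((q - 1) / 2) * Gamma ((q + 1) / 2) *
          (Gamma (m / 2 + 1) * π ^ (m / 2)) :=
        mul_le_mul_of_nonneg_right (le_two_rpow_mul_pi_rpow_mul_Gamma_half (by linarith)) hden.le
    _ ≤ 2 ^ q * π ^ ((q - 1) / 2) * Gamma ((q + 1) / 2) *
          (Gamma (1 + n / 2) ^ (m / n) * π ^ (m / 2)) := by
        gcongr
    _ = _ := by ring
end
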